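/- arXiv:2302.09941 — 3 statements merged into one kernel-verified Lean document; each statement's English description precedes it below -/
import Mathlib

section
/- With N(T,Δ) as above (for arbitrary T₁,…,Tₙ > 0), we have |N(T,Δ) − Δ·Σ_{∅≠𝒩⊆[n]} (-1)^{|𝒩|+1}/M_𝒩| ≤ 2ⁿ for every Δ ≥ 0, where 1/M_𝒩 = 0 when M_𝒩 = ∞. -/
def mults (T Δ : ℝ) : Set ℝ := {x : ℝ | ∃ k : ℕ, x = k * T ∧ x ≤ Δ}

def commonMults {n : ℕ} (T : Fin n → ℝ) (𝒩 : Finset (Fin n)) : Set ℝ :=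
  {m : ℝ | 0 < m ∧ ∀ i ∈ 𝒩, ∃ k : ℕ, m = k * T i}

/-!
For a nonempty `𝒩`, the multiples up to `Δ` common to all `Tᵢ` (`i ∈ 𝒩`) are exactly the
multiples `0, M, 2M, …` of the least common multiple `M = M_𝒩` (by Euclidean division by `M`),
or just `0` when there is no common multiple. Their number `⌊Δ/M⌋ + 1` differs from `Δ/M` by at
most one, so by inclusion–exclusion each of the fewer than `2ⁿ` terms contributes an error of at
most one.
-/

open Finset

theorem abs_card_biUnion_sub_sum_le {ι α : Type*} [DecidableEq α] (s : Finset ι)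
    (S : ι → Finset α) (a : Finset ι → ℝ)
    (h : ∀ t ⊆ s, ∀ ht : t.Nonempty, |(#(t.inf' ht S) : ℝ) - a t| ≤ 1) :
    |(#(s.biUnion S) : ℝ) - ∑ t ∈ s.powerset.filter (·.Nonempty), (-1 : ℝ) ^ (#t + 1) * a t|
      ≤ 2 ^ #s := by
  have hIE : (#(s.biUnion S) : ℝ) = ∑ t : s.powerset.filter (·.Nonempty),
      (-1 : ℝ) ^ (#t.1 + 1) * #(t.1.inf' (mem_filter.1 t.2).2 S) := by
    exact_mod_cast inclusion_exclusion_card_biUnion s S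
  rw [hIE, ← sum_attach _ (fun t => (-1) ^ (#t + 1) * a t), ← univ_eq_attach,
    ← sum_sub_distrib]
  calc _ ≤ ∑ t : s.powerset.filter (·.Nonempty),
        |(-1) ^ (#t.1 + 1) * (#(t.1.inf' (mem_filter.1 t.2).2 S) : ℝ) - (-1) ^ (#t.1 + 1) * a t|
        := abs_sum_le_sum_abs _ _
    _ ≤ ∑ _t : s.powerset.filter (·.Nonempty), (1 : ℝ) := by
        refine sum_le_sum fun t _ => ?_
        obtain ⟨hts, ht⟩ := mem_filter.1 t.2
        rw [← mul_sub, abs_mul, abs_pow, abs_neg, abs_one, one_pow, one_mul]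
        exact h t (mem_powerset.1 hts) ht
    _ ≤ 2 ^ #s := by
        rw [sum_const, card_univ, Fintype.card_coe, nsmul_one]
        exact_mod_cast (card_filter_le _ _).trans_eq (card_powerset s)

noncomputable def multsFinset (T Δ : ℝ) : Finset ℝ :=
  (range (⌊Δ / T⌋₊ + 1)).image fun k : ℕ => (k : ℝ) * T

theorem coe_multsFinset {T Δ : ℝ} (hT : 0 < T) (hΔ : 0 ≤ Δ) :
    (multsFinset T Δ : Set ℝ) = mults T Δ := by
  ext x
  simp only [multsFinset, coe_image, coe_range, Set.mem_image, Set.mem_Iio, mults,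
    Set.mem_ofPred_eq, Nat.lt_succ_iff, Nat.le_floor_iff (div_nonneg hΔ hT.le), le_div_iff₀ hT]
  exact ⟨fun ⟨k, hk, hx⟩ => ⟨k, hx.symm, hx ▸ hk⟩, fun ⟨k, hx, hk⟩ => ⟨k, hx ▸ hk, hx.symm⟩⟩

theorem card_multsFinset {T : ℝ} (hT : 0 < T) (Δ : ℝ) :
    #(multsFinset T Δ) = ⌊Δ / T⌋₊ + 1 := by
  rw [multsFinset, card_image_of_injective _ fun a b hab => by
    exact_mod_cast mul_right_cancel₀ hT.ne' hab, card_range]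

theorem abs_ncard_mults_sub_div_le {T Δ : ℝ} (hT : 0 < T) (hΔ : 0 ≤ Δ) :
    |((mults T Δ).ncard : ℝ) - Δ / T| ≤ 1 := by
  rw [← coe_multsFinset hT hΔ, Set.ncard_coe_finset, card_multsFinset hT, abs_le]
  have hfloor := Nat.floor_le (div_nonneg hΔ hT.le)
  have hlt := Nat.lt_floor_add_one (Δ / T)
  push_cast
  constructor <;> linarith

section commonMults

variable {n : ℕ} {T : Fin n → ℝ} {t : Finset (Fin n)}

theorem exists_isLeast_commonMults (hT : ∀ i, 0 < T i) (ht : t.Nonempty)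
    (hS : (commonMults T t).Nonempty) : ∃ M, IsLeast (commonMults T t) M := by
  classical
  obtain ⟨i, hi⟩ := ht
  have hk : ∃ k : ℕ, (k : ℝ) * T i ∈ commonMults T t := by
    obtain ⟨m, hm⟩ := hS
    obtain ⟨k, rfl⟩ := hm.2 i hi
    exact ⟨k, hm⟩
  refine ⟨Nat.find hk * T i, Nat.find_spec hk, fun m hm => ?_⟩
  obtain ⟨k, rfl⟩ := hm.2 i hi
  have := (hT i).le
  gcongr
  exact Nat.find_min' hk hm

theorem exists_nat_mul_eq_of_isLeast_commonMults (hT : ∀ i, 0 < T i) {M x : ℝ}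
    (hM : IsLeast (commonMults T t) M) (hx0 : 0 ≤ x) (hx : ∀ i ∈ t, ∃ k : ℕ, x = k * T i) :
    ∃ q : ℕ, x = q * M := by
  have hMpos : 0 < M := hM.1.1
  obtain ⟨q, hqx, hxq⟩ : ∃ q : ℕ, q * M ≤ x ∧ x < (q + 1) * M :=
    ⟨⌊x / M⌋₊, (le_div_iff₀ hMpos).1 (Nat.floor_le (div_nonneg hx0 hMpos.le)),
      (div_lt_iff₀ hMpos).1 (Nat.lt_floor_add_one _)⟩
  refine ⟨q, by_contra fun hne => ?_⟩
  -- Otherwise the remainder `x - q M ∈ (0, M)` would be a smaller common multiple.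
  have hrem : x - q * M ∈ commonMults T t := by
    refine ⟨sub_pos.2 (lt_of_le_of_ne hqx (Ne.symm hne)), fun i hi => ?_⟩
    obtain ⟨k, hk⟩ := hx i hi
    obtain ⟨l, hl⟩ := hM.1.2 i hi
    have hlk : q * l ≤ k := by
      have : ((q * l : ℕ) : ℝ) * T i ≤ k * T i := by
        push_cast; rwa [mul_assoc, ← hl, ← hk]
      exact_mod_cast le_of_mul_le_mul_right this (hT i)
    exact ⟨k - q * l, by rw [Nat.cast_sub hlk, hk, hl]; push_cast; ring⟩
  linarith [hM.2 hrem]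

theorem iInter_mults_eq_mults_of_isLeast (hT : ∀ i, 0 < T i) (ht : t.Nonempty) {M : ℝ}
    (hM : IsLeast (commonMults T t) M) (Δ : ℝ) :
    ⋂ i ∈ t, mults (T i) Δ = mults M Δ := by
  ext x
  simp only [Set.mem_iInter₂, mults, Set.mem_ofPred_eq]
  constructor
  · intro hx
    obtain ⟨i, hi⟩ := ht
    obtain ⟨k, hk, hxΔ⟩ := hx i hi
    have hx0 : 0 ≤ x := hk ▸ mul_nonneg k.cast_nonneg (hT i).le
    obtain ⟨q, hq⟩ := exists_nat_mul_eq_of_isLeast_commonMults hT hM hx0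
      fun j hj => (hx j hj).imp fun _ => And.left
    exact ⟨q, hq, hxΔ⟩
  · rintro ⟨q, rfl, hqΔ⟩ i hi
    obtain ⟨l, hl⟩ := hM.1.2 i hi
    exact ⟨q * l, by rw [hl]; push_cast; ring, hqΔ⟩

theorem iInter_mults_eq_singleton_zero (hT : ∀ i, 0 < T i) (ht : t.Nonempty)
    (h : commonMults T t = ∅) {Δ : ℝ} (hΔ : 0 ≤ Δ) :
    ⋂ i ∈ t, mults (T i) Δ = {0} := by
  ext x
  simp only [Set.mem_iInter₂, mults, Set.mem_ofPred_eq, Set.mem_singleton_iff]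
  constructor
  · intro hx
    obtain ⟨i, hi⟩ := ht
    obtain ⟨k, hk, -⟩ := hx i hi
    by_contra hx0
    refine Set.eq_empty_iff_forall_notMem.1 h x ⟨?_, fun j hj => (hx j hj).imp fun _ => And.left⟩
    exact lt_of_le_of_ne (hk ▸ mul_nonneg k.cast_nonneg (hT i).le) (Ne.symm hx0)
  · rintro rfl i -
    exact ⟨0, by simp, hΔ⟩

theorem abs_ncard_iInter_mults_sub_le (hT : ∀ i, 0 < T i) (ht : t.Nonempty) {invM : ℝ}
    (hinv_empty : commonMults T t = ∅ → invM = 0)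
    (hinv_least : ∀ M, IsLeast (commonMults T t) M → invM = 1 / M) {Δ : ℝ} (hΔ : 0 ≤ Δ) :
    |((⋂ i ∈ t, mults (T i) Δ).ncard : ℝ) - Δ * invM| ≤ 1 := by
  rcases Set.eq_empty_or_nonempty (commonMults T t) with h | h
  · rw [iInter_mults_eq_singleton_zero hT ht h hΔ, Set.ncard_singleton, hinv_empty h]
    norm_num
  · obtain ⟨M, hM⟩ := exists_isLeast_commonMults hT ht h
    rw [iInter_mults_eq_mults_of_isLeast hT ht hM, hinv_least M hM, ← div_eq_mul_one_div]
    exact abs_ncard_mults_sub_div_le hM.1.1 hΔ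

end commonMults

theorem joint_orders_additive_error {n : ℕ} (T : Fin n → ℝ) (hT : ∀ i, 0 < T i)
    (invM : Finset (Fin n) → ℝ)
    (hinv_empty : ∀ 𝒩 : Finset (Fin n), 𝒩.Nonempty →
      commonMults T 𝒩 = ∅ → invM 𝒩 = 0)
    (hinv_least : ∀ 𝒩 : Finset (Fin n), 𝒩.Nonempty →
      ∀ M : ℝ, IsLeast (commonMults T 𝒩) M → invM 𝒩 = 1 / M)
    (Δ : ℝ) (hΔ : 0 ≤ Δ) :
    |((⋃ i, mults (T i) Δ).ncard : ℝ) -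
      Δ * ∑ 𝒩 ∈ Finset.univ.powerset.filter (fun s : Finset (Fin n) => s.Nonempty),
        (-1 : ℝ) ^ (𝒩.card + 1) * invM 𝒩| ≤ 2 ^ n := by
  classical
  set F : Fin n → Finset ℝ := fun i => multsFinset (T i) Δ
  have hF (i : Fin n) : (F i : Set ℝ) = mults (T i) Δ := coe_multsFinset (hT i) hΔ
  have hunion : ⋃ i, mults (T i) Δ = ↑(univ.biUnion F) := by simp [hF]
  have hinter (t : Finset (Fin n)) (ht : t.Nonempty) :
      (↑(t.inf' ht F) : Set ℝ) = ⋂ i ∈ t, mults (T i) Δ := by ext; simp [← hF]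
  have hbound := abs_card_biUnion_sub_sum_le univ F (fun t => Δ * invM t) fun t _ ht => by
    rw [← Set.ncard_coe_finset, hinter t ht]
    exact abs_ncard_iInter_mults_sub_le hT ht (hinv_empty t ht) (hinv_least t ht) hΔ
  rw [hunion, Set.ncard_coe_finset, mul_sum]
  simpa only [mul_left_comm Δ, card_univ, Fintype.card_fin] using hbound
end

section
/- For positive reals T₁,…,Tₙ, the limit lim_{Δ→∞} N(T,Δ)/Δ exists. -/
open Filter Set AddSubgroup Topology

theorem AddSubgroup.exists_eq_zmultiples_of_le_zmultiples {G : Type*} [AddCommGroup G]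
    [LinearOrder G] [IsOrderedAddMonoid G] [Archimedean G] {H : AddSubgroup G} {a : G}
    (h : H ≤ zmultiples a) : ∃ b, H = zmultiples b := by
  rcases eq_or_ne a 0 with rfl | ha
  · exact ⟨0, by rw [zmultiples_zero_eq_bot] at h ⊢; exact le_bot_iff.mp h⟩
  simp_rw [zmultiples_eq_closure]
  refine cyclic_of_isolated_zero (abs_pos.mpr ha) (disjoint_left.mpr ?_)
  rintro x hx ⟨hx0, hxa⟩
  obtain ⟨k, rfl⟩ := mem_zmultiples_iff.mp (h hx)
  rw [← abs_of_pos hx0, abs_zsmul] at hxa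
  have hk := (zsmul_lt_zsmul_iff_left (abs_pos.mpr ha)).mp (hxa.trans_eq (one_zsmul _).symm)
  obtain rfl : k = 0 := by rw [abs_lt] at hk; omega
  simp at hx0

lemma mem_zmultiples_and_nonneg_iff {g x : ℝ} (hg : 0 < g) :
    x ∈ zmultiples g ∧ 0 ≤ x ↔ ∃ k : ℕ, (k : ℝ) * g = x := by
  constructor
  · rintro ⟨hx, hx0⟩
    obtain ⟨k, rfl⟩ := mem_zmultiples_iff.mp hx
    have hk : 0 ≤ k := by
      rw [zsmul_eq_mul] at hx0
      exact_mod_cast nonneg_of_mul_nonneg_left hx0 hg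
    obtain ⟨m, rfl⟩ := Int.eq_ofNat_of_zero_le hk
    exact ⟨m, by simp⟩
  · rintro ⟨k, rfl⟩
    exact ⟨mem_zmultiples_iff.mpr ⟨k, by simp⟩, by positivity⟩

lemma mults_eq_zmultiples_inter_Icc {T : ℝ} (hT : 0 < T) (Δ : ℝ) :
    mults T Δ = (zmultiples T : Set ℝ) ∩ Icc 0 Δ := by
  ext x
  rw [mem_inter_iff, mem_Icc, ← and_assoc, SetLike.mem_coe, mem_zmultiples_and_nonneg_iff hT]
  simp only [mults, mem_ofPred_eq, eq_comm (a := x)]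
  constructor
  · rintro ⟨k, rfl, hk⟩; exact ⟨⟨k, rfl⟩, hk⟩
  · rintro ⟨⟨k, rfl⟩, hk⟩; exact ⟨k, rfl, hk⟩

lemma ncard_zmultiples_inter_Icc {g Δ : ℝ} (hg : 0 ≤ g) (hΔ : 0 ≤ Δ) :
    ((zmultiples g : Set ℝ) ∩ Icc 0 Δ).ncard = ⌊Δ / g⌋₊ + 1 := by
  rcases hg.eq_or_lt with rfl | hg
  · simp [zmultiples_zero_eq_bot, hΔ]
  have hinj : Function.Injective fun k : ℕ => (k : ℝ) * g := fun k l h => by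
    exact_mod_cast mul_right_cancel₀ hg.ne' h
  have himage : (zmultiples g : Set ℝ) ∩ Icc 0 Δ
      = (fun k : ℕ => (k : ℝ) * g) '' ↑(Finset.Iic ⌊Δ / g⌋₊) := by
    ext x
    rw [mem_inter_iff, mem_Icc, ← and_assoc, SetLike.mem_coe, mem_zmultiples_and_nonneg_iff hg]
    simp only [mem_image, Finset.coe_Iic, mem_Iic, Nat.le_floor_iff (div_nonneg hΔ hg.le),
      le_div_iff₀ hg]
    constructor
    · rintro ⟨⟨k, rfl⟩, hk⟩; exact ⟨k, hk, rfl⟩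
    · rintro ⟨k, hk, rfl⟩; exact ⟨⟨k, rfl⟩, hk⟩
  rw [himage, ncard_image_of_injective _ hinj, ncard_coe_finset, Nat.card_Iic]

lemma finite_zmultiples_inter_Icc (g Δ : ℝ) : ((zmultiples g : Set ℝ) ∩ Icc 0 Δ).Finite := by
  rcases lt_or_ge Δ 0 with hΔ | hΔ
  · simp [Icc_eq_empty_of_lt hΔ]
  rw [← zmultiples_abs]
  exact finite_of_ncard_pos (by rw [ncard_zmultiples_inter_Icc (abs_nonneg g) hΔ]; omega)

def HasDensity (S : Set ℝ) (c : ℝ) : Prop :=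
  Tendsto (fun Δ => ((S ∩ Icc 0 Δ).ncard : ℝ) / Δ) atTop (𝓝 c)

lemma hasDensity_empty : HasDensity ∅ 0 := by
  simp [HasDensity]

lemma HasDensity.union {A B : Set ℝ} {a b c : ℝ} (hA : ∀ Δ, (A ∩ Icc 0 Δ).Finite)
    (hB : ∀ Δ, (B ∩ Icc 0 Δ).Finite) (ha : HasDensity A a) (hb : HasDensity B b)
    (hab : HasDensity (A ∩ B) c) : HasDensity (A ∪ B) (a + b - c) := by
  have hcount (Δ : ℝ) : (((A ∪ B) ∩ Icc 0 Δ).ncard : ℝ)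
      = (A ∩ Icc 0 Δ).ncard + (B ∩ Icc 0 Δ).ncard - (A ∩ B ∩ Icc 0 Δ).ncard := by
    rw [union_inter_distrib_right, inter_inter_distrib_right, eq_sub_iff_add_eq]
    exact_mod_cast ncard_union_add_ncard_inter _ _ (hA Δ) (hB Δ)
  simp only [HasDensity, hcount, sub_div, add_div]
  exact (ha.add hb).sub hab

lemma tendsto_floor_div_add_one_div {g : ℝ} (hg : 0 ≤ g) :
    Tendsto (fun Δ => ((⌊Δ / g⌋₊ + 1 : ℕ) : ℝ) / Δ) atTop (𝓝 g⁻¹) := by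
  have hinv : Tendsto (fun Δ : ℝ => 1 / Δ) atTop (𝓝 0) := by
    simpa only [one_div] using tendsto_inv_atTop_zero
  rcases hg.eq_or_lt with rfl | hg
  · simpa using hinv
  have hfloor : Tendsto (fun Δ => (⌊Δ / g⌋₊ : ℝ) / (Δ / g) * g⁻¹) atTop (𝓝 (1 * g⁻¹)) :=
    (tendsto_nat_floor_div_atTop.comp (tendsto_id.atTop_div_const hg)).mul_const _
  rw [← add_zero g⁻¹, ← one_mul g⁻¹]
  refine (hfloor.add hinv).congr' ?_
  filter_upwards [eventually_gt_atTop 0] with Δ hΔ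
  push_cast
  field_simp

-- For `g = 0`, `|g|⁻¹ = 0` is indeed the density of `{0}`.
lemma hasDensity_zmultiples (g : ℝ) : HasDensity (zmultiples g) |g|⁻¹ := by
  rw [← zmultiples_abs]
  refine (tendsto_floor_div_add_one_div (abs_nonneg g)).congr' ?_
  filter_upwards [eventually_ge_atTop 0] with Δ hΔ
  rw [ncard_zmultiples_inter_Icc (abs_nonneg g) hΔ]

lemma exists_hasDensity_biUnion_zmultiples {ι : Type*} (s : Finset ι) (g : ι → ℝ) :
    ∃ c, HasDensity (⋃ i ∈ s, (zmultiples (g i) : Set ℝ)) c := by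
  classical
  induction s using Finset.induction_on generalizing g with
  | empty => exact ⟨0, by simpa using hasDensity_empty⟩
  | insert a s _ ih =>
    choose h hh using fun i => exists_eq_zmultiples_of_le_zmultiples
      (inf_le_left : zmultiples (g a) ⊓ zmultiples (g i) ≤ zmultiples (g a))
    have hinter : (zmultiples (g a) : Set ℝ) ∩ ⋃ i ∈ s, (zmultiples (g i) : Set ℝ)
        = ⋃ i ∈ s, (zmultiples (h i) : Set ℝ) := by
      simp only [inter_iUnion₂, ← coe_inf, hh]
    obtain ⟨c, hc⟩ := ih g
    obtain ⟨d, hd⟩ := ih h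
    refine ⟨|g a|⁻¹ + c - d, ?_⟩
    rw [Finset.set_biUnion_insert]
    refine HasDensity.union (finite_zmultiples_inter_Icc _) (fun Δ => ?_)
      (hasDensity_zmultiples _) hc (hinter ▸ hd)
    rw [iUnion₂_inter]
    exact s.finite_toSet.biUnion fun i _ => finite_zmultiples_inter_Icc _ _

theorem joint_order_density_exists {n : ℕ} (T : Fin n → ℝ) (hT : ∀ i, 0 < T i) :
    ∃ c : ℝ, Filter.Tendsto
      (fun Δ : ℝ => ((⋃ i, mults (T i) Δ).ncard : ℝ) / Δ)
      Filter.atTop (nhds c) := by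
  obtain ⟨c, hc⟩ := exists_hasDensity_biUnion_zmultiples Finset.univ T
  refine ⟨c, ?_⟩
  simpa only [HasDensity, Finset.mem_univ, iUnion_true, iUnion_inter,
    ← mults_eq_zmultiples_inter_Icc (hT _)] using hc
end

section
/- If T₁, T₂ > 0 either have no common integer multiple or have least common multiple greater than Ψ·min{T₁,T₂}, then for every Δ ≥ 0, |M(T₁,Δ) ∩ M(T₂,Δ)| ≤ Δ/(Ψ·min{T₁,T₂}) + 1. -/
def commonMults2 (T₁ T₂ : ℝ) : Set ℝ :=
  {m : ℝ | 0 < m ∧ (∃ k : ℕ, m = k * T₁) ∧ (∃ k : ℕ, m = k * T₂)}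

/-!
The multiples `k * T` with `k : ℕ` are the nonnegative elements of the cyclic group `ℤ ∙ T`.
The intersection `ℤ ∙ T₁ ⊓ ℤ ∙ T₂` is a subgroup of `ℝ` that is discrete (it lies in `ℤ ∙ T₁`),
so when it is nontrivial it is generated by its least positive element `L = lcm(T₁, T₂)`.
The common multiples in `[0, Δ]` are then the multiples of `L` there, at most `Δ / L + 1` of
them, and `L > Ψ * min T₁ T₂`; without a common multiple only `0` is left.
-/

open AddSubgroup Set

section

variable {T T₁ T₂ L Δ x : ℝ}

theorem exists_nat_mul_eq_iff_mem_zmultiples (hT : 0 < T) :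
    (∃ k : ℕ, x = k * T) ↔ x ∈ zmultiples T ∧ 0 ≤ x := by
  constructor
  · rintro ⟨k, rfl⟩
    exact ⟨⟨k, by simp⟩, by positivity⟩
  · rintro ⟨hmem, hx⟩
    obtain ⟨n, rfl⟩ := mem_zmultiples_iff.1 hmem
    rw [zsmul_eq_mul] at hx
    lift n to ℕ using by exact_mod_cast nonneg_of_mul_nonneg_left hx hT
    exact ⟨n, by simp⟩

theorem mem_mults_iff (hT : 0 < T) : x ∈ mults T Δ ↔ x ∈ zmultiples T ∧ 0 ≤ x ∧ x ≤ Δ := by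
  simp only [mults, mem_ofPred_eq, ← exists_and_right, ← and_assoc,
    ← exists_nat_mul_eq_iff_mem_zmultiples hT]

theorem commonMults2_eq (h₁ : 0 < T₁) (h₂ : 0 < T₂) :
    commonMults2 T₁ T₂ = {x | x ∈ zmultiples T₁ ⊓ zmultiples T₂ ∧ 0 < x} := by
  ext x
  simp only [commonMults2, mem_ofPred_eq, mem_inf, exists_nat_mul_eq_iff_mem_zmultiples h₁,
    exists_nat_mul_eq_iff_mem_zmultiples h₂]
  constructor
  · rintro ⟨hx, ⟨hx₁, -⟩, hx₂, -⟩
    exact ⟨⟨hx₁, hx₂⟩, hx⟩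
  · rintro ⟨⟨hx₁, hx₂⟩, hx⟩
    exact ⟨hx, ⟨hx₁, hx.le⟩, hx₂, hx.le⟩

theorem disjoint_zmultiples_Ioo (hT : 0 < T) : Disjoint (zmultiples T : Set ℝ) (Ioo 0 T) := by
  rw [Set.disjoint_left]
  rintro _ hmem ⟨hpos, hlt⟩
  obtain ⟨n, rfl⟩ := mem_zmultiples_iff.1 hmem
  rw [zsmul_eq_mul] at hpos hlt
  have h0 : (0 : ℤ) < n := by exact_mod_cast pos_of_mul_pos_left hpos hT.le
  have h1 : n < 1 := by exact_mod_cast (mul_lt_iff_lt_one_left hT).1 hlt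
  omega

theorem exists_isLeast_commonMults2 (h₁ : 0 < T₁) (h₂ : 0 < T₂)
    (hne : (commonMults2 T₁ T₂).Nonempty) : ∃ L, IsLeast (commonMults2 T₁ T₂) L := by
  rw [commonMults2_eq h₁ h₂] at hne ⊢
  obtain ⟨x, hxH, hx⟩ := hne
  refine exists_isLeast_pos (a := T₁) ?_ h₁ ?_
  · exact ne_bot_iff_exists_ne_zero.2 ⟨⟨x, hxH⟩, by simpa using hx.ne'⟩
  · exact (disjoint_zmultiples_Ioo h₁).mono_left (by simp)

theorem mults_inter_mults_subset_mults (h₁ : 0 < T₁) (h₂ : 0 < T₂)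
    (hL : IsLeast (commonMults2 T₁ T₂) L) : mults T₁ Δ ∩ mults T₂ Δ ⊆ mults L Δ := by
  rw [commonMults2_eq h₁ h₂] at hL
  have hH : zmultiples T₁ ⊓ zmultiples T₂ = zmultiples L := by
    rw [zmultiples_eq_closure L]; exact cyclic_of_min hL
  intro x ⟨hx₁, hx₂⟩
  rw [mem_mults_iff h₁] at hx₁
  rw [mem_mults_iff h₂] at hx₂
  rw [mem_mults_iff hL.1.2, ← hH]
  exact ⟨⟨hx₁.1, hx₂.1⟩, hx₁.2⟩

theorem mults_inter_mults_subset_zero (h₁ : 0 < T₁) (hC : commonMults2 T₁ T₂ = ∅) :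
    mults T₁ Δ ∩ mults T₂ Δ ⊆ {0} := by
  rintro x ⟨⟨k, rfl, -⟩, ⟨j, hj, -⟩⟩
  by_contra hx
  have hpos : 0 < (k : ℝ) * T₁ := lt_of_le_of_ne (by positivity) (Ne.symm hx)
  exact hC.subset ⟨hpos, ⟨k, rfl⟩, ⟨j, hj⟩⟩

theorem mults_subset_image (hT : 0 < T) :
    mults T Δ ⊆ (fun k : ℕ => (k : ℝ) * T) '' Iic ⌊Δ / T⌋₊ := by
  rintro _ ⟨k, rfl, hk⟩
  exact ⟨k, Nat.le_floor ((le_div_iff₀ hT).2 hk), rfl⟩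

theorem mults_finite (hT : 0 < T) : (mults T Δ).Finite :=
  ((finite_Iic _).image _).subset (mults_subset_image hT)

theorem ncard_mults_le (hT : 0 < T) (hΔ : 0 ≤ Δ) : ((mults T Δ).ncard : ℝ) ≤ Δ / T + 1 := by
  have hcard : (mults T Δ).ncard ≤ ⌊Δ / T⌋₊ + 1 :=
    calc (mults T Δ).ncard
        ≤ ((fun k : ℕ => (k : ℝ) * T) '' Iic ⌊Δ / T⌋₊).ncard :=
          ncard_le_ncard (mults_subset_image hT) ((finite_Iic _).image _)
      _ ≤ (Iic ⌊Δ / T⌋₊).ncard := ncard_image_le (finite_Iic _)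
      _ = ⌊Δ / T⌋₊ + 1 := by simp
  calc ((mults T Δ).ncard : ℝ) ≤ ⌊Δ / T⌋₊ + 1 := by exact_mod_cast hcard
    _ ≤ Δ / T + 1 := by gcongr; exact Nat.floor_le (by positivity)

end

theorem misaligned_intersection_bound (T₁ T₂ Ψ Δ : ℝ) (h₁ : 0 < T₁)
    (h₂ : 0 < T₂) (hΨ : 0 < Ψ) (hΔ : 0 ≤ Δ)
    (hmis : commonMults2 T₁ T₂ = ∅ ∨
      ∀ L : ℝ, IsLeast (commonMults2 T₁ T₂) L → Ψ * min T₁ T₂ < L) :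
    ((mults T₁ Δ ∩ mults T₂ Δ).ncard : ℝ) ≤ Δ / (Ψ * min T₁ T₂) + 1 := by
  have hε : 0 < Ψ * min T₁ T₂ := mul_pos hΨ (lt_min h₁ h₂)
  rcases (commonMults2 T₁ T₂).eq_empty_or_nonempty with hC | hC
  · have hcard : (mults T₁ Δ ∩ mults T₂ Δ).ncard ≤ 1 := by
      simpa using ncard_le_ncard (mults_inter_mults_subset_zero h₁ hC)
    calc ((mults T₁ Δ ∩ mults T₂ Δ).ncard : ℝ) ≤ 1 := by exact_mod_cast hcard
      _ ≤ Δ / (Ψ * min T₁ T₂) + 1 := by have := div_nonneg hΔ hε.le; linarith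
  · obtain ⟨L, hL⟩ := exists_isLeast_commonMults2 h₁ h₂ hC
    have hεL := hmis.resolve_left hC.ne_empty L hL
    have hLpos : 0 < L := hε.trans hεL
    calc ((mults T₁ Δ ∩ mults T₂ Δ).ncard : ℝ)
        ≤ (mults L Δ).ncard := by
          exact_mod_cast ncard_le_ncard (mults_inter_mults_subset_mults h₁ h₂ hL)
            (mults_finite hLpos)
      _ ≤ Δ / L + 1 := ncard_mults_le hLpos hΔ
      _ ≤ Δ / (Ψ * min T₁ T₂) + 1 := by gcongr
end
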